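/- Let Q ⊆ ℝ^n be open, Γ^i_{jk} : Q → ℝ smooth Christoffel symbols, and Y_1, …, Y_m : Q → ℝ^n smooth vector fields. Suppose V is a smooth vector field on Q such that V = Σ_{a=1}^m α_a Y_a and ∇_V V = Σ_{a=1}^m β_a Y_a for smooth functions α_a, β_a : Q → ℝ. Let s : [0, T] → ℝ be C² and let γ : [0, T] → Q be a C¹ curve satisfying γ̇(t) = ṡ(t) V(γ(t)). Then γ is C² and satisfies γ̈^i + Γ^i_{jk}(γ) γ̇^j γ̇^k = Σ_{a=1}^m Y_a^i(γ) u_a(t) with the explicit controls u_a(t) = s̈(t) α_a(γ(t)) + ṡ(t)² β_a(γ(t)); that is, every time-reparametrized integral curve of V is a controlled solution of the mechanical system. -/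

import Mathlib

open scoped BigOperators

noncomputable section

/-- `Γ(q)(v,w)` is the vector with `i`-th component `Γ^i_{jk}(q) v^j w^k`. -/
def christoffelOp (n : ℕ) (Γ : (Fin n → ℝ) → Fin n → Fin n → Fin n → ℝ)
    (q v w : Fin n → ℝ) : Fin n → ℝ :=
  fun i => ∑ j, ∑ k, Γ q i j k * v j * w k

/-- The covariant derivative `∇_X Y`, with `i`-th component
`(∂Y^i/∂q^j) X^j + Γ^i_{jk} X^j Y^k`. -/
def covDeriv (n : ℕ) (Γ : (Fin n → ℝ) → Fin n → Fin n → Fin n → ℝ)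
    (X Y : (Fin n → ℝ) → (Fin n → ℝ)) : (Fin n → ℝ) → (Fin n → ℝ) :=
  fun q => fderiv ℝ Y q (X q) + christoffelOp n Γ q (X q) (Y q)

lemma christoffelOp_smul_smul (n : ℕ) (Γ : (Fin n → ℝ) → Fin n → Fin n → Fin n → ℝ)
    (q v w : Fin n → ℝ) (c : ℝ) :
    christoffelOp n Γ q (c • v) (c • w) = (c ^ 2) • christoffelOp n Γ q v w := by
  funext i
  simp only [christoffelOp, Pi.smul_apply, smul_eq_mul, Finset.mul_sum]
  refine Finset.sum_congr rfl fun j _ => Finset.sum_congr rfl fun k _ => by ring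

/-- if `V = Σ_a α_a Y_a` and `∇_V V = Σ_a β_a Y_a`, then every
time-reparametrized integral curve `γ̇ = ṡ V(γ)` of `V` is C² and solves the
mechanical system with the explicit controls
`u_a(t) = s̈(t) α_a(γ(t)) + ṡ(t)² β_a(γ(t))`. -/
theorem reparametrized_integral_curve_is_controlled (n m : ℕ)
    (Q : Set (Fin n → ℝ)) (hQ : IsOpen Q)
    (Γ : (Fin n → ℝ) → Fin n → Fin n → Fin n → ℝ)
    (hΓ : ∀ i j k : Fin n, ContDiffOn ℝ (⊤ : ℕ∞) (fun q => Γ q i j k) Q)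
    (Y : Fin m → (Fin n → ℝ) → (Fin n → ℝ))
    (hY : ∀ a, ContDiffOn ℝ (⊤ : ℕ∞) (Y a) Q)
    (V : (Fin n → ℝ) → (Fin n → ℝ)) (hV : ContDiffOn ℝ (⊤ : ℕ∞) V Q)
    (α β : Fin m → (Fin n → ℝ) → ℝ)
    (hα : ∀ a, ContDiffOn ℝ (⊤ : ℕ∞) (α a) Q) (hβ : ∀ a, ContDiffOn ℝ (⊤ : ℕ∞) (β a) Q)
    (hVspan : ∀ q ∈ Q, V q = ∑ a, α a q • Y a q)
    (hnabla : ∀ q ∈ Q, covDeriv n Γ V V q = ∑ a, β a q • Y a q)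
    (T : ℝ) (hT : 0 < T) (s : ℝ → ℝ) (hs : ContDiffOn ℝ 2 s (Set.Icc 0 T))
    (γ : ℝ → (Fin n → ℝ)) (hγ : ContDiffOn ℝ 1 γ (Set.Icc 0 T))
    (hγQ : ∀ t ∈ Set.Icc (0:ℝ) T, γ t ∈ Q)
    (hγode : ∀ t ∈ Set.Icc (0:ℝ) T,
      derivWithin γ (Set.Icc 0 T) t = derivWithin s (Set.Icc 0 T) t • V (γ t)) :
    ContDiffOn ℝ 2 γ (Set.Icc 0 T) ∧
    ∀ t ∈ Set.Icc (0:ℝ) T,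
      derivWithin (derivWithin γ (Set.Icc 0 T)) (Set.Icc 0 T) t
        + christoffelOp n Γ (γ t) (derivWithin γ (Set.Icc 0 T) t)
            (derivWithin γ (Set.Icc 0 T) t)
      = ∑ a, (derivWithin (derivWithin s (Set.Icc 0 T)) (Set.Icc 0 T) t
                * α a (γ t)
              + (derivWithin s (Set.Icc 0 T) t) ^ 2 * β a (γ t))
            • Y a (γ t) := by
  set I := Set.Icc (0:ℝ) T with hI
  have hU : UniqueDiffOn ℝ I := uniqueDiffOn_Icc hT
  have hγd : DifferentiableOn ℝ γ I := hγ.differentiableOn one_ne_zero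
  -- s' is C¹ on I
  have hs2 : ContDiffOn ℝ ((1:ℕ) + 1) s I := by exact_mod_cast hs
  have hs' : ContDiffOn ℝ 1 (derivWithin s I) I :=
    ((contDiffOn_succ_iff_derivWithin hU).mp hs2).2.2
  -- V ∘ γ is C¹ on I
  have hV1 : ContDiffOn ℝ 1 V Q := hV.of_le (by simp)
  have hVγ : ContDiffOn ℝ 1 (fun t => V (γ t)) I :=
    hV1.comp hγ fun t ht => hγQ t ht
  -- the candidate derivative of γ is C¹ on I
  have hrhs : ContDiffOn ℝ 1 (fun t => derivWithin s I t • V (γ t)) I := hs'.smul hVγ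
  have hγ2 : ContDiffOn ℝ 2 γ I := by
    have : ContDiffOn ℝ ((1:ℕ) + 1) γ I := by
      refine (contDiffOn_succ_iff_derivWithin hU).mpr ⟨hγd, by simp, ?_⟩
      exact hrhs.congr hγode
    exact_mod_cast this
  refine ⟨hγ2, fun t ht => ?_⟩
  have ut : UniqueDiffWithinAt ℝ I t := hU t ht
  have hQt : γ t ∈ Q := hγQ t ht
  have hVat : ContDiffAt ℝ (⊤ : ℕ∞) V (γ t) := hV.contDiffAt (hQ.mem_nhds hQt)
  have Vdiff : DifferentiableAt ℝ V (γ t) := hVat.differentiableAt (by simp)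
  set c₁ : ℝ := derivWithin s I t with hc₁
  set c₂ : ℝ := derivWithin (derivWithin s I) I t with hc₂
  -- derivative facts
  have h1 : HasDerivWithinAt (derivWithin s I) c₂ I t :=
    ((hs'.differentiableOn one_ne_zero) t ht).hasDerivWithinAt
  have h2 : HasDerivWithinAt γ (derivWithin γ I t) I t :=
    (hγd t ht).hasDerivWithinAt
  have h3 : HasDerivWithinAt (V ∘ γ)
      (fderiv ℝ V (γ t) (derivWithin γ I t)) I t :=
    HasFDerivAt.comp_hasDerivWithinAt (f := γ) (x := t) Vdiff.hasFDerivAt h2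
  have h3' : HasDerivWithinAt (fun τ => V (γ τ))
      (fderiv ℝ V (γ t) (derivWithin γ I t)) I t := h3
  have h4 : HasDerivWithinAt (fun τ => derivWithin s I τ • V (γ τ))
      (c₁ • fderiv ℝ V (γ t) (derivWithin γ I t) + c₂ • V (γ t)) I t := h1.smul h3'
  have h5 : HasDerivWithinAt (derivWithin γ I)
      (c₁ • fderiv ℝ V (γ t) (derivWithin γ I t) + c₂ • V (γ t)) I t :=
    h4.congr hγode (hγode t ht)
  have hdd : derivWithin (derivWithin γ I) I t
      = c₁ • fderiv ℝ V (γ t) (derivWithin γ I t) + c₂ • V (γ t) :=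
    h5.derivWithin ut
  have hγ't : derivWithin γ I t = c₁ • V (γ t) := hγode t ht
  have hmap : fderiv ℝ V (γ t) (c₁ • V (γ t)) = c₁ • fderiv ℝ V (γ t) (V (γ t)) :=
    (fderiv ℝ V (γ t)).map_smul c₁ (V (γ t))
  have hcov : fderiv ℝ V (γ t) (V (γ t))
      + christoffelOp n Γ (γ t) (V (γ t)) (V (γ t)) = ∑ a, β a (γ t) • Y a (γ t) :=
    hnabla (γ t) hQt
  have hspan : V (γ t) = ∑ a, α a (γ t) • Y a (γ t) := hVspan (γ t) hQt
  rw [hdd, hγ't, hmap, christoffelOp_smul_smul]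
  have expand : ∑ a, (c₂ * α a (γ t) + c₁ ^ 2 * β a (γ t)) • Y a (γ t)
      = c₂ • (∑ a, α a (γ t) • Y a (γ t)) + c₁ ^ 2 • (∑ a, β a (γ t) • Y a (γ t)) := by
    simp [add_smul, mul_smul, Finset.sum_add_distrib, Finset.smul_sum]
  rw [expand, ← hspan, ← hcov]
  have hsq : c₁ • (c₁ • fderiv ℝ V (γ t) (V (γ t)))
      = c₁ ^ 2 • fderiv ℝ V (γ t) (V (γ t)) := by
    rw [smul_smul, sq]
  rw [hsq]
  module

end
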